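/- Let m be a positive natural number, let v ∈ ℝ^m, and let L : {-1,1}^m → ℝ be any function. Then the function F : ℝ → ℝ defined for t > 0 by F(t) = max_{g ∈ {-1,1}^m} ( t ∑_i g_i v_i + L(g) ) − t · max_{h ∈ {-1,1}^m} ∑_i h_i v_i is antitone (monotonically nonincreasing) on the positive reals. -/

import Mathlib

/-- The hypercube `{-1,1}^m` as a subset of `ℝ^m`. -/
def Hc (m : ℕ) : Set (Fin m → ℝ) := {h | ∀ i, h i = 1 ∨ h i = -1}

/-! Proof idea: write `b * S g + L g = (a * S g + L g) + (b - a) * S g`. For `a ≤ b`, the maximum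
of a sum is at most the sum of the maxima, and the maximum of `(b - a) * S` is `(b - a)` times the
maximum of `S`, so `F b ≤ F a`. -/

open Set

theorem csSup_image_add_le {α β : Type*} [ConditionallyCompleteLattice β] [Add β]
    [AddLeftMono β] [AddRightMono β] {s : Set α} (hs : s.Nonempty) {f g : α → β}
    (hf : BddAbove (f '' s)) (hg : BddAbove (g '' s)) :
    sSup ((fun x => f x + g x) '' s) ≤ sSup (f '' s) + sSup (g '' s) :=
  csSup_le (hs.image _) <| by
    rintro _ ⟨x, hx, rfl⟩
    exact add_le_add (le_csSup hf (mem_image_of_mem f hx)) (le_csSup hg (mem_image_of_mem g hx))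

theorem Real.sSup_image_const_mul_of_nonneg {α : Type*} {c : ℝ} (hc : 0 ≤ c) (s : Set α)
    (f : α → ℝ) : sSup ((fun x => c * f x) '' s) = c * sSup (f '' s) := by
  rw [← smul_eq_mul, ← Real.sSup_smul_of_nonneg hc, ← image_smul, image_image]
  rfl

theorem antitone_sSup_image_mul_add_sub_mul_sSup {α : Type*} {s : Set α} (hs : s.Finite)
    (hne : s.Nonempty) (S L : α → ℝ) :
    Antitone fun t => sSup ((fun x => t * S x + L x) '' s) - t * sSup (S '' s) := by
  intro a b hab
  have key : sSup ((fun x => b * S x + L x) '' s)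
      ≤ sSup ((fun x => a * S x + L x) '' s) + (b - a) * sSup (S '' s) :=
    calc sSup ((fun x => b * S x + L x) '' s)
        = sSup ((fun x => (a * S x + L x) + (b - a) * S x) '' s) := by
          congr 2; funext x; ring
      _ ≤ sSup ((fun x => a * S x + L x) '' s) + sSup ((fun x => (b - a) * S x) '' s) :=
          csSup_image_add_le hne (hs.image _).bddAbove (hs.image _).bddAbove
      _ = sSup ((fun x => a * S x + L x) '' s) + (b - a) * sSup (S '' s) := by
          rw [Real.sSup_image_const_mul_of_nonneg (sub_nonneg.mpr hab)]
  dsimp only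
  linarith

theorem Hc_finite (m : ℕ) : (Hc m).Finite := by
  have : Hc m = univ.pi fun _ => {1, -1} := by ext h; simp [Hc, mem_pi]
  rw [this]
  exact Finite.pi fun _ => (finite_singleton _).insert _

theorem Hc_nonempty (m : ℕ) : (Hc m).Nonempty :=
  ⟨fun _ => 1, fun _ => Or.inl rfl⟩

theorem stmt_5_general (m : ℕ) (v : Fin m → ℝ)
    (L : (Fin m → ℝ) → ℝ) :
    AntitoneOn
      (fun t : ℝ =>
        sSup ((fun g => t * ∑ i, g i * v i + L g) '' Hc m) -
          t * sSup ((fun h => ∑ i, h i * v i) '' Hc m))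
      (Set.Ioi (0 : ℝ)) :=
  (antitone_sSup_image_mul_add_sub_mul_sSup (Hc_finite m) (Hc_nonempty m)
    (fun h => ∑ i, h i * v i) L).antitoneOn _

/-- Monotone-in-scale reformulation of Proposition 1: the scaled
structured-prediction upper bound
`F t = max_{g} (t ∑ i, g i * v i + L g) − t · max_{h} ∑ i, h i * v i`
is antitone on the positive reals. -/
theorem stmt_5 (m : ℕ) (hm : 0 < m) (v : Fin m → ℝ)
    (L : (Fin m → ℝ) → ℝ) :
    AntitoneOn
      (fun t : ℝ =>
        sSup ((fun g => t * ∑ i, g i * v i + L g) '' Hc m) -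
          t * sSup ((fun h => ∑ i, h i * v i) '' Hc m))
      (Set.Ioi (0 : ℝ)) :=
  stmt_5_general m v L
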